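/- In the directed balanced two-community block model with a > b and a ≠ b, fix γ ∈ (0,1/2) with γm an integer, and suppose (â,b̂) satisfies â > b̂. Then for an initial labeling e ∈ E^γ and a node i in community 1 (i.e., 1 ≤ i ≤ m), the one-step CPL rule ĉ_i(e) = argmax_{k∈{1,2}} { Σ_{ℓ=1}^2 b̃_{iℓ}(e) log θ̂_{kℓ}(e) } (with equal priors π̂₁ = π̂₂ = 1/2) assigns ĉ_i(e) = 1 if and only if ξ̃_i(σ(e)) = Σ_{j=1}^n Ãᵈ_{ij} σ_j(e) < 0, where σ_j(e) = 1 if e_j = 1 and −1 if e_j = 2. In particular, the row-normalized parameters satisfy θ̂₁₁(e) = θ̂₂₂(e) = γ â/(â+b̂) + (1−γ) b̂/(â+b̂) and θ̂₁₂(e) = θ̂₂₁(e) = γ b̂/(â+b̂) + (1−γ) â/(â+b̂), and θ̂₁₁(e) < θ̂₂₁(e). -/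

import Mathlib

open MeasureTheory ProbabilityTheory Finset

noncomputable section

/-- Confusion matrix `R(e)_{kl} = (1/n) #{i : e i = k, c i = l}` (labels in `Fin 2`,
with `0` encoding community 1 and `1` encoding community 2). -/
def Rmat (n : ℕ) (e c : Fin n → Fin 2) (k l : Fin 2) : ℝ :=
  ((univ.filter fun i => e i = k ∧ c i = l).card : ℝ) / n

/-- `Λ̂ = [n R(e) P̂]ᵀ`, i.e. `Λ̂_{kl} = n Σ_j R(e)_{lj} P̂_{jk}`. -/
def lamHat (n : ℕ) (e c : Fin n → Fin 2) (P : Fin 2 → Fin 2 → ℝ) (k l : Fin 2) : ℝ :=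
  n * ∑ j, Rmat n e c l j * P j k

/-- `θ̂`: row normalization of `Λ̂`. -/
def thetaHat (n : ℕ) (e c : Fin n → Fin 2) (P : Fin 2 → Fin 2 → ℝ) (k l : Fin 2) : ℝ :=
  lamHat n e c P k l / ∑ l', lamHat n e c P k l'

/-- Block sums `b_{il}(e) = Σ_j A i j · 1{e j = l}`. -/
def bSum {Ω : Type*} (n : ℕ) (A : Fin n → Fin n → Ω → ℝ) (e : Fin n → Fin 2)
    (i : Fin n) (l : Fin 2) (ω : Ω) : ℝ :=
  ∑ j, A i j ω * (if e j = l then 1 else 0)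

/-- The CPL criterion `log π̂_k + Σ_l b_{il}(e) log θ̂_{kl}(e)` with equal priors
`π̂₁ = π̂₂ = 1/2`. -/
def cplCrit {Ω : Type*} (n : ℕ) (A : Fin n → Fin n → Ω → ℝ) (e c : Fin n → Fin 2)
    (P : Fin 2 → Fin 2 → ℝ) (i : Fin n) (ω : Ω) (k : Fin 2) : ℝ :=
  Real.log (1 / 2) + ∑ l, bSum n A e i l ω * Real.log (thetaHat n e c P k l)

/-- One-step CPL label estimate `ĉ_i(e)` (argmax over `k`; ties resolved as
label 2, i.e. `1 : Fin 2`). -/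
def cHat {Ω : Type*} (n : ℕ) (A : Fin n → Fin n → Ω → ℝ) (e c : Fin n → Fin 2)
    (P : Fin 2 → Fin 2 → ℝ) (i : Fin n) (ω : Ω) : Fin 2 :=
  if cplCrit n A e c P i ω 1 < cplCrit n A e c P i ω 0 then 0 else 1

end

/-! For `e ∈ E^γ` the confusion matrix `R(e)` has `γ/2` on the diagonal and `(1-γ)/2` off it, so
with the symmetric `P̂` the row-normalized `θ̂` is again symmetric, with diagonal
`p = (γâ + (1-γ)b̂)/(â+b̂)` and off-diagonal `q = (γb̂ + (1-γ)â)/(â+b̂)`; `q - p` is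
`(1-2γ)(â-b̂)/(â+b̂) > 0`. The two CPL criteria then differ by
`(b̃ᵢ₂ - b̃ᵢ₁)(log q - log p)`, so label 1 wins exactly when `ξ̃ᵢ = b̃ᵢ₁ - b̃ᵢ₂ < 0`. -/

lemma card_filter_eq_zero_add_card_filter_eq_one {ι : Type*} [Fintype ι] (e : ι → Fin 2)
    (p : ι → Prop) [DecidablePred p] :
    #{i | e i = 0 ∧ p i} + #{i | e i = 1 ∧ p i} = #{i | p i} := by
  simp only [card_filter, ← sum_add_distrib]
  refine sum_congr rfl fun i _ => ?_
  rcases Fin.exists_fin_two.mp ⟨e i, rfl⟩ with h | h <;> simp [h]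

lemma thetaHat_of_symmetric {n : ℕ} (hn : n ≠ 0) {e c : Fin n → Fin 2}
    {P : Fin 2 → Fin 2 → ℝ} {r s α β : ℝ}
    (hR : ∀ k l, Rmat n e c k l = if k = l then r else s)
    (hP : ∀ k l, P k l = if k = l then α else β) (k l : Fin 2) :
    thetaHat n e c P k l =
      (if k = l then r * α + s * β else s * α + r * β) / ((r + s) * (α + β)) := by
  have hlam (k l : Fin 2) :
      lamHat n e c P k l = n * if k = l then r * α + s * β else s * α + r * β := by
    fin_cases k <;> fin_cases l <;>
      simp only [lamHat, Fin.sum_univ_two, hR, hP, Fin.reduceFinMk, Fin.isValue, ↓reduceIte,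
        Fin.reduceEq] <;> ring
  have hrow (k : Fin 2) : ∑ l', lamHat n e c P k l' = n * ((r + s) * (α + β)) := by
    fin_cases k <;> simp [Fin.sum_univ_two, hlam] <;> ring
  rw [thetaHat, hlam, hrow, mul_div_mul_left _ _ (by exact_mod_cast hn)]

lemma bSum_zero_sub_bSum_one {Ω : Type*} {n : ℕ} (A : Fin n → Fin n → Ω → ℝ)
    (e : Fin n → Fin 2) (i : Fin n) (ω : Ω) :
    bSum n A e i 0 ω - bSum n A e i 1 ω = ∑ j, A i j ω * (if e j = 0 then 1 else -1) := by
  rw [bSum, bSum, ← sum_sub_distrib]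
  refine sum_congr rfl fun j _ => ?_
  rcases Fin.exists_fin_two.mp ⟨e j, rfl⟩ with h | h <;> simp [h]

lemma cHat_eq_zero_iff_of_thetaHat {Ω : Type*} {n : ℕ} {A : Fin n → Fin n → Ω → ℝ}
    {e c : Fin n → Fin 2} {P : Fin 2 → Fin 2 → ℝ} {p q : ℝ}
    (hθ : ∀ k l, thetaHat n e c P k l = if k = l then p else q) (hp : 0 < p) (hpq : p < q)
    (i : Fin n) (ω : Ω) :
    cHat n A e c P i ω = 0 ↔ ∑ j, A i j ω * (if e j = 0 then 1 else -1) < 0 := by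
  have hlog : 0 < Real.log q - Real.log p := sub_pos.2 (Real.log_lt_log hp hpq)
  have hcrit : cplCrit n A e c P i ω 0 - cplCrit n A e c P i ω 1 =
      (bSum n A e i 1 ω - bSum n A e i 0 ω) * (Real.log q - Real.log p) := by
    simp only [cplCrit, Fin.sum_univ_two, hθ, Fin.isValue, ↓reduceIte, Fin.reduceEq]
    ring
  rw [← bSum_zero_sub_bSum_one, sub_neg, ← sub_pos, ← mul_pos_iff_of_pos_right hlog, ← hcrit,
    sub_pos, cHat]
  split_ifs with h <;> simp [h]

section Balanced

variable {m g : ℕ} {c e : Fin (2 * m) → Fin 2}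

lemma community_eq_zero_iff (hc : ∀ i, c i = if (i : ℕ) < m then 0 else 1) (i : Fin (2 * m)) :
    c i = 0 ↔ (i : ℕ) < m := by
  rw [hc]; split_ifs <;> simp [*]

lemma community_eq_one_iff (hc : ∀ i, c i = if (i : ℕ) < m then 0 else 1) (i : Fin (2 * m)) :
    c i = 1 ↔ m ≤ (i : ℕ) := by
  rw [hc]; split_ifs <;> simp <;> omega

lemma card_community (hc : ∀ i, c i = if (i : ℕ) < m then 0 else 1) (l : Fin 2) :
    #{i | c i = l} = m := by
  have h0 : #{i | c i = 0} = m := by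
    simp_rw [community_eq_zero_iff hc, Fin.card_filter_val_lt]
    omega
  have h1 := card_filter_eq_zero_add_card_filter_eq_one c fun _ => True
  simp only [and_true, filter_true, card_univ, Fintype.card_fin, h0] at h1
  fin_cases l
  · exact h0
  · simp only [Fin.mk_one]; omega

lemma card_confusion (hc : ∀ i, c i = if (i : ℕ) < m then 0 else 1)
    (he1 : #{i : Fin (2 * m) | (i : ℕ) < m ∧ e i = 0} = g)
    (he2 : #{i : Fin (2 * m) | m ≤ (i : ℕ) ∧ e i = 1} = g) (k l : Fin 2) :
    (#{i | e i = k ∧ c i = l} : ℝ) = if k = l then (g : ℝ) else m - g := by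
  have h00 : (#{i | e i = 0 ∧ c i = 0} : ℝ) = g := by
    simpa only [community_eq_zero_iff hc, and_comm] using congrArg Nat.cast he1
  have h11 : (#{i | e i = 1 ∧ c i = 1} : ℝ) = g := by
    simpa only [community_eq_one_iff hc, and_comm] using congrArg Nat.cast he2
  have hsplit (l : Fin 2) :
      (#{i | e i = 0 ∧ c i = l} : ℝ) + #{i | e i = 1 ∧ c i = l} = m := by
    rw [← Nat.cast_add, card_filter_eq_zero_add_card_filter_eq_one, card_community hc]
  have h0 := hsplit 0
  have h1 := hsplit 1
  fin_cases k <;> fin_cases l <;> simp only [Fin.zero_eta, Fin.mk_one] at * <;>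
    simp only [Fin.isValue, ↓reduceIte, zero_ne_one, one_ne_zero] <;> linarith

lemma Rmat_of_balanced (hc : ∀ i, c i = if (i : ℕ) < m then 0 else 1)
    (hm : 0 < m) {γ : ℝ} (hg : (g : ℝ) = γ * m)
    (he1 : #{i : Fin (2 * m) | (i : ℕ) < m ∧ e i = 0} = g)
    (he2 : #{i : Fin (2 * m) | m ≤ (i : ℕ) ∧ e i = 1} = g) (k l : Fin 2) :
    Rmat (2 * m) e c k l = if k = l then γ / 2 else (1 - γ) / 2 := by
  have hm' : (m : ℝ) ≠ 0 := by positivity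
  rw [Rmat, card_confusion hc he1 he2, hg]
  push_cast
  split_ifs
  · exact mul_div_mul_right _ _ hm'
  · rw [← one_sub_mul]; exact mul_div_mul_right _ _ hm'

lemma thetaHat_of_balanced (hc : ∀ i, c i = if (i : ℕ) < m then 0 else 1)
    (hm : 0 < m) {γ : ℝ} (hg : (g : ℝ) = γ * m)
    (he1 : #{i : Fin (2 * m) | (i : ℕ) < m ∧ e i = 0} = g)
    (he2 : #{i : Fin (2 * m) | m ≤ (i : ℕ) ∧ e i = 1} = g)
    {ahat bhat : ℝ} (hs : ahat + bhat ≠ 0) {P : Fin 2 → Fin 2 → ℝ}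
    (hP : ∀ k l, P k l = if k = l then ahat / m else bhat / m) (k l : Fin 2) :
    thetaHat (2 * m) e c P k l =
      if k = l then γ * (ahat / (ahat + bhat)) + (1 - γ) * (bhat / (ahat + bhat))
      else γ * (bhat / (ahat + bhat)) + (1 - γ) * (ahat / (ahat + bhat)) := by
  have hm' : (m : ℝ) ≠ 0 := by positivity
  rw [thetaHat_of_symmetric (by omega) (Rmat_of_balanced hc hm hg he1 he2) hP]
  split_ifs <;> field_simp <;> ring

end Balanced

theorem stmt15_general
    {Ω : Type*}
    (m : ℕ) (hm : 0 < m)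
    (A : Fin (2 * m) → Fin (2 * m) → Ω → ℝ)
    (γ : ℝ) (hγ0 : 0 < γ) (hγ2 : γ < 1 / 2)
    (g : ℕ) (hg : (g : ℝ) = γ * m)
    (c : Fin (2 * m) → Fin 2) (hc : ∀ i, c i = if (i : ℕ) < m then 0 else 1)
    (ahat bhat : ℝ) (hbhat0 : 0 ≤ bhat) (hhat : bhat < ahat)
    (P : Fin 2 → Fin 2 → ℝ)
    (hP : ∀ k l, P k l = if k = l then ahat / m else bhat / m)
    (e : Fin (2 * m) → Fin 2)
    (he1 : (univ.filter fun i : Fin (2 * m) => (i : ℕ) < m ∧ e i = 0).card = g)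
    (he2 : (univ.filter fun i : Fin (2 * m) => m ≤ (i : ℕ) ∧ e i = 1).card = g)
    (i : Fin (2 * m)) :
    (thetaHat (2 * m) e c P 0 0 = γ * (ahat / (ahat + bhat)) +
        (1 - γ) * (bhat / (ahat + bhat)) ∧
      thetaHat (2 * m) e c P 1 1 = γ * (ahat / (ahat + bhat)) +
        (1 - γ) * (bhat / (ahat + bhat))) ∧
    (thetaHat (2 * m) e c P 0 1 = γ * (bhat / (ahat + bhat)) +
        (1 - γ) * (ahat / (ahat + bhat)) ∧
      thetaHat (2 * m) e c P 1 0 = γ * (bhat / (ahat + bhat)) +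
        (1 - γ) * (ahat / (ahat + bhat))) ∧
    thetaHat (2 * m) e c P 0 0 < thetaHat (2 * m) e c P 1 0 ∧
    (∀ ω, cHat (2 * m) A e c P i ω = 0 ↔
      (∑ j, A i j ω * (if e j = 0 then (1 : ℝ) else -1)) < 0) := by
  have hs : 0 < ahat + bhat := by linarith
  have hθ := thetaHat_of_balanced hc hm hg he1 he2 hs.ne' hP
  have hin_pos : 0 < γ * (ahat / (ahat + bhat)) + (1 - γ) * (bhat / (ahat + bhat)) :=
    add_pos_of_pos_of_nonneg (mul_pos hγ0 (div_pos (by linarith) hs))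
      (mul_nonneg (by linarith) (div_nonneg hbhat0 hs.le))
  have hin_lt_out : γ * (ahat / (ahat + bhat)) + (1 - γ) * (bhat / (ahat + bhat)) <
      γ * (bhat / (ahat + bhat)) + (1 - γ) * (ahat / (ahat + bhat)) := by
    have hgap : γ * (bhat / (ahat + bhat)) + (1 - γ) * (ahat / (ahat + bhat)) -
        (γ * (ahat / (ahat + bhat)) + (1 - γ) * (bhat / (ahat + bhat))) =
        (1 - 2 * γ) * ((ahat - bhat) / (ahat + bhat)) := by ring
    exact sub_pos.1 (hgap ▸ mul_pos (by linarith) (div_pos (by linarith) hs))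
  refine ⟨⟨by simp [hθ], by simp [hθ]⟩, ⟨by simp [hθ], by simp [hθ]⟩,
    by simpa [hθ] using hin_lt_out, cHat_eq_zero_iff_of_thetaHat hθ hin_pos hin_lt_out i⟩

/-- **Reduction of the one-step CPL rule to a neighborhood majority vote.**
In the directed balanced two-community block model with `a > b`, for
`γ ∈ (0,1/2)` with `γm` an integer, estimates `â > b̂ ≥ 0`, an initial labeling
`e ∈ E^γ` and a node `i` in community 1, the row-normalized parameters satisfy
`θ̂₁₁ = θ̂₂₂ = γâ/(â+b̂) + (1−γ)b̂/(â+b̂)`,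
`θ̂₁₂ = θ̂₂₁ = γb̂/(â+b̂) + (1−γ)â/(â+b̂)`, `θ̂₁₁ < θ̂₂₁`, and the CPL rule
assigns label 1 to node `i` iff `ξ̃ᵢ(σ(e)) = Σ_j A i j σ_j(e) < 0`, where
`σ_j(e) = 1` if `e j` is label 1 and `−1` otherwise. -/
theorem stmt15
    {Ω : Type*} [MeasureSpace Ω] [IsProbabilityMeasure (ℙ : Measure Ω)]
    (m : ℕ) (hm : 0 < m)
    (a b : ℝ) (hb0 : 0 ≤ b) (hba : b < a) (ham : a ≤ m)
    (A : Fin (2 * m) → Fin (2 * m) → Ω → ℝ)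
    (hmeas : ∀ i j, Measurable (A i j))
    (h01 : ∀ i j ω, A i j ω = 0 ∨ A i j ω = 1)
    (hind : iIndepFun
      (fun p : Fin (2 * m) × Fin (2 * m) => A p.1 p.2) ℙ)
    (hmean : ∀ i j, (ℙ {ω | A i j ω = 1}).toReal =
      if ((i : ℕ) < m ↔ (j : ℕ) < m) then a / m else b / m)
    (γ : ℝ) (hγ0 : 0 < γ) (hγ2 : γ < 1 / 2)
    (g : ℕ) (hg : (g : ℝ) = γ * m)
    (c : Fin (2 * m) → Fin 2) (hc : ∀ i, c i = if (i : ℕ) < m then 0 else 1)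
    (ahat bhat : ℝ) (hbhat0 : 0 ≤ bhat) (hhat : bhat < ahat)
    (P : Fin 2 → Fin 2 → ℝ)
    (hP : ∀ k l, P k l = if k = l then ahat / m else bhat / m)
    (e : Fin (2 * m) → Fin 2)
    (he1 : (univ.filter fun i : Fin (2 * m) => (i : ℕ) < m ∧ e i = 0).card = g)
    (he2 : (univ.filter fun i : Fin (2 * m) => m ≤ (i : ℕ) ∧ e i = 1).card = g)
    (i : Fin (2 * m)) (hi : (i : ℕ) < m) :
    (thetaHat (2 * m) e c P 0 0 = γ * (ahat / (ahat + bhat)) +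
        (1 - γ) * (bhat / (ahat + bhat)) ∧
      thetaHat (2 * m) e c P 1 1 = γ * (ahat / (ahat + bhat)) +
        (1 - γ) * (bhat / (ahat + bhat))) ∧
    (thetaHat (2 * m) e c P 0 1 = γ * (bhat / (ahat + bhat)) +
        (1 - γ) * (ahat / (ahat + bhat)) ∧
      thetaHat (2 * m) e c P 1 0 = γ * (bhat / (ahat + bhat)) +
        (1 - γ) * (ahat / (ahat + bhat))) ∧
    thetaHat (2 * m) e c P 0 0 < thetaHat (2 * m) e c P 1 0 ∧
    (∀ ω, cHat (2 * m) A e c P i ω = 0 ↔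
      (∑ j, A i j ω * (if e j = 0 then (1 : ℝ) else -1)) < 0) :=
  stmt15_general m hm A γ hγ0 hγ2 g hg c hc ahat bhat hbhat0 hhat P hP e he1 he2 i
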